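/- If A ∈ ℝ^{n×n} is strictly diagonally dominant with Δ_i(A) := |A_{ii}| − Σ_{j≠i}|A_{ij}| ≥ 1/ε for all i (where ε > 0), then A is invertible and ‖A⁻¹‖_∞ ≤ ε. -/

import Mathlib

/-!
Evaluate `A` at a vector `x` on a coordinate `k` where `|x k|` is maximal: the diagonal term
dominates, so `Δ_k(A) |x k| ≤ |(A x) k|`, i.e. `‖x‖_∞ ≤ ‖A x‖_∞ / min_k Δ_k(A)`. Applied to
`x = A⁻¹ s`, with `s` the sign pattern of the `i`-th row of `A⁻¹`, this bounds the `i`-th absolute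
row sum `(A⁻¹ s) i` by `1 / min_k Δ_k(A) ≤ ε`.
-/

open Finset Matrix

theorem Matrix.mulVec_apply_eq_diag_add_sum_erase {ι R : Type*} [Fintype ι] [DecidableEq ι]
    [NonUnitalNonAssocSemiring R] (A : Matrix ι ι R) (x : ι → R) (k : ι) :
    (A *ᵥ x) k = A k k * x k + ∑ j ∈ univ.erase k, A k j * x j :=
  (add_sum_erase _ _ (mem_univ k)).symm

section LinearOrderedRing

variable {R : Type*} [Ring R] [LinearOrder R] [IsStrictOrderedRing R]

theorem SignType.abs_cast_le_one (s : SignType) : |(s : R)| ≤ 1 := by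
  cases s <;> simp

theorem Matrix.sum_abs_eq_mulVec_sign {ι κ : Type*} [Fintype κ] (B : Matrix ι κ R) (i : ι) :
    ∑ j, |B i j| = (B *ᵥ fun j => (SignType.sign (B i j) : R)) i := by
  simp [mulVec, dotProduct]

variable {ι : Type*} [Fintype ι] [DecidableEq ι]

theorem Matrix.sub_sum_erase_abs_mul_le_abs_mulVec (A : Matrix ι ι R) {x : ι → R} {k : ι}
    (hk : ∀ j, |x j| ≤ |x k|) :
    (|A k k| - ∑ j ∈ univ.erase k, |A k j|) * |x k| ≤ |(A *ᵥ x) k| := by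
  have off_diag : |∑ j ∈ univ.erase k, A k j * x j| ≤ (∑ j ∈ univ.erase k, |A k j|) * |x k| :=
    calc |∑ j ∈ univ.erase k, A k j * x j|
        ≤ ∑ j ∈ univ.erase k, |A k j| * |x k| :=
          (abs_sum_le_sum_abs _ _).trans <| sum_le_sum fun j _ => by
            rw [abs_mul]; exact mul_le_mul_of_nonneg_left (hk j) (abs_nonneg _)
      _ = (∑ j ∈ univ.erase k, |A k j|) * |x k| := (sum_mul ..).symm
  calc (|A k k| - ∑ j ∈ univ.erase k, |A k j|) * |x k|
      ≤ |A k k * x k| - |∑ j ∈ univ.erase k, A k j * x j| := by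
        rw [sub_mul, abs_mul]; exact sub_le_sub_left off_diag _
    _ ≤ |(A *ᵥ x) k| := by
        rw [mulVec_apply_eq_diag_add_sum_erase]; exact abs_sub_abs_le_abs_add _ _

theorem Matrix.mul_abs_le_of_abs_mulVec_le (A : Matrix ι ι R) {δ c : R}
    (hdom : ∀ k, δ ≤ |A k k| - ∑ j ∈ univ.erase k, |A k j|) {x : ι → R}
    (hx : ∀ k, |(A *ᵥ x) k| ≤ c) (i : ι) : δ * |x i| ≤ c := by
  obtain ⟨k, -, hk⟩ := exists_max_image univ (fun j => |x j|) ⟨i, mem_univ i⟩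
  have hk : ∀ j, |x j| ≤ |x k| := fun j => hk j (mem_univ j)
  have hxk : δ * |x k| ≤ c :=
    calc δ * |x k| ≤ (|A k k| - ∑ j ∈ univ.erase k, |A k j|) * |x k| :=
          mul_le_mul_of_nonneg_right (hdom k) (abs_nonneg _)
      _ ≤ c := (A.sub_sum_erase_abs_mul_le_abs_mulVec hk).trans (hx k)
  rcases le_or_gt 0 δ with hδ | hδ
  · exact (mul_le_mul_of_nonneg_left (hk i) hδ).trans hxk
  · exact (mul_nonpos_of_nonpos_of_nonneg hδ.le (abs_nonneg _)).trans ((abs_nonneg _).trans (hx i))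

end LinearOrderedRing

/-- Varah's bound: if `A` is strictly diagonally dominant with
`Δ_i(A) = |A_{ii}| - Σ_{j≠i}|A_{ij}| ≥ 1/ε` for all `i`, then `A` is invertible and
`‖A⁻¹‖_∞ ≤ ε` (every absolute row sum of `A⁻¹` is at most `ε`). -/
theorem stmt13 {n : ℕ} (ε : ℝ) (hε : 0 < ε) (A : Matrix (Fin n) (Fin n) ℝ)
    (hdom : ∀ i, 1 / ε ≤ |A i i| - ∑ j ∈ Finset.univ.erase i, |A i j|) :
    IsUnit A ∧ ∀ i, ∑ j, |A⁻¹ i j| ≤ ε := by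
  have hdet : A.det ≠ 0 := det_ne_zero_of_sum_row_lt_diag fun k => by
    simp only [Real.norm_eq_abs]; linarith [hdom k, one_div_pos.2 hε]
  refine ⟨(isUnit_iff_isUnit_det A).2 hdet.isUnit, fun i => ?_⟩
  set s : Fin n → ℝ := fun j => SignType.sign (A⁻¹ i j)
  have hAs : A *ᵥ (A⁻¹ *ᵥ s) = s := by
    rw [mulVec_mulVec, mul_nonsing_inv A hdet.isUnit, one_mulVec]
  have hrow : 1 / ε * |(A⁻¹ *ᵥ s) i| ≤ 1 :=
    A.mul_abs_le_of_abs_mulVec_le hdom (fun k => by rw [hAs]; exact SignType.abs_cast_le_one _) i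
  calc ∑ j, |A⁻¹ i j| = (A⁻¹ *ᵥ s) i := A⁻¹.sum_abs_eq_mulVec_sign i
    _ ≤ |(A⁻¹ *ᵥ s) i| := le_abs_self _
    _ ≤ ε := by rwa [one_div, inv_mul_le_iff₀ hε, mul_one] at hrow
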